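/- arXiv:math/0407281 — 6 statements merged into one kernel-verified Lean document; each statement's English description precedes it below -/
import Mathlib

section
/- Liu's modified Gibbs update probabilities U'_x(y,z) = min(T(x,z)/(1−T(x,y)), T(x,z)/(1−T(x,z))) for z ≠ y satisfy the detailed balance condition T(x,y)·U'_x(y,z) = T(x,z)·U'_x(z,y) for all y ≠ z. -/
/-- Liu's update probability `U'_x(y, z)` with `p = T(x, y)` and `q = T(x, z)`. -/
noncomputable def liuUpdate (p q : ℝ) : ℝ :=
  min (q / (1 - p)) (q / (1 - q))

-- Both sides equal `min (p * q / (1 - p)) (p * q / (1 - q))`.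
theorem mul_liuUpdate_comm {p q : ℝ} (hp : 0 ≤ p) (hq : 0 ≤ q) :
    p * liuUpdate p q = q * liuUpdate q p := by
  rw [liuUpdate, liuUpdate, mul_min_of_nonneg _ _ hp, mul_min_of_nonneg _ _ hq, min_comm]
  ring_nf

theorem liu_update_detailed_balance_general
    {X : Type*}
    (T : X → X → ℝ)
    (hTnn : ∀ x y, 0 ≤ T x y)
    (U' : X → X → X → ℝ)
    (hU' : ∀ x y z, z ≠ y → T x y < 1 → T x z < 1 →
      U' x y z = min (T x z / (1 - T x y)) (T x z / (1 - T x z))) :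
    ∀ x y z, y ≠ z → T x y < 1 → T x z < 1 →
      T x y * U' x y z = T x z * U' x z y := by
  intro x y z hyz hy hz
  rw [hU' x y z hyz.symm hy hz, hU' x z y hyz hz hy]
  exact mul_liuUpdate_comm (hTnn x y) (hTnn x z)

theorem liu_update_detailed_balance
    {X : Type*} [Fintype X]
    (T : X → X → ℝ)
    (hTnn : ∀ x y, 0 ≤ T x y) (hTrow : ∀ x, ∑ y, T x y = 1)
    (U' : X → X → X → ℝ)
    (hU' : ∀ x y z, z ≠ y → T x y < 1 → T x z < 1 →
      U' x y z = min (T x z / (1 - T x y)) (T x z / (1 - T x z))) :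
    ∀ x y z, y ≠ z → T x y < 1 → T x z < 1 →
      T x y * U' x y z = T x z * U' x z y :=
  liu_update_detailed_balance_general T hTnn U' hU'
end

section
/- Liu's modified Gibbs update probabilities satisfy U'_x(y,z) ≥ T(x,z) for all y ≠ z, i.e., the probability of moving to any state other than the current one is at least as large as under the original update. -/
theorem le_div_one_sub {α : Type*} [Field α] [LinearOrder α] [IsStrictOrderedRing α]
    {a t : α} (ha : 0 ≤ a) (ht₀ : 0 ≤ t) (ht₁ : t < 1) : a ≤ a / (1 - t) :=
  le_div_self ha (sub_pos.mpr ht₁) (sub_le_self 1 ht₀)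

theorem liu_update_dominates_general
    {X : Type*}
    (T : X → X → ℝ)
    (hTnn : ∀ x y, 0 ≤ T x y)
    (U' : X → X → X → ℝ)
    (hU' : ∀ x y z, z ≠ y →
      U' x y z = min (T x z / (1 - T x y)) (T x z / (1 - T x z))) :
    ∀ x y z, y ≠ z → T x y < 1 → T x z < 1 → T x z ≤ U' x y z := by
  intro x y z hyz hTy hTz
  rw [hU' x y z hyz.symm]
  exact le_min (le_div_one_sub (hTnn x z) (hTnn x y) hTy)
    (le_div_one_sub (hTnn x z) (hTnn x z) hTz)

theorem liu_update_dominates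
    {X : Type*} [Fintype X]
    (T : X → X → ℝ)
    (hTnn : ∀ x y, 0 ≤ T x y) (hTrow : ∀ x, ∑ y, T x y = 1)
    (U' : X → X → X → ℝ)
    (hU' : ∀ x y z, z ≠ y →
      U' x y z = min (T x z / (1 - T x y)) (T x z / (1 - T x z))) :
    ∀ x y z, y ≠ z → T x y < 1 → T x z < 1 → T x z ≤ U' x y z :=
  liu_update_dominates_general T hTnn U' hU'
end

section
/- Let T satisfy detailed balance with respect to π, and let U'_x(y,·) be probability distributions on X satisfying T(x,y)U'_x(y,z) = T(x,z)U'_x(z,y) for all y ≠ z. Then the transition probabilities T̈'((x₀,x₁),(y₀,y₁)) = δ(x₁,y₀)·U'_{x₁}(x₀,y₁) on Ẍ = {(x,y) : T(x,y) > 0} leave invariant the distribution π̈(x,y) = π(x)T(x,y): for all (x₁,y₁) ∈ Ẍ, ∑_{(x₀,y₀)∈Ẍ} π̈(x₀,y₀)·T̈'((x₀,y₀),(x₁,y₁)) = π̈(x₁,y₁). -/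
/-!
Detailed balance for `T` turns the flux `π x₀ T(x₀,x₁) U'_{x₁}(x₀,y₁)` into
`π x₁ T(x₁,x₀) U'_{x₁}(x₀,y₁)`, and the balance condition on `U'_{x₁}` turns this into
`π x₁ T(x₁,y₁) U'_{x₁}(y₁,x₀)`. Summing over `x₀` uses only that `U'_{x₁}(y₁,·)` is a
probability distribution. Pairs outside `Ẍ` carry zero mass, so restricting the sum to `Ẍ`
changes nothing.
-/

section

variable {X : Type*} {T : X → X → ℝ} {π : X → ℝ} {U' : X → X → X → ℝ}

theorem flux_eq_reverse_flux_of_balance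
    (hdb : ∀ x y, π x * T x y = π y * T y x)
    (hU'bal : ∀ x y z, y ≠ z → T x y * U' x y z = T x z * U' x z y) (x₀ x₁ y₁ : X) :
    π x₀ * T x₀ x₁ * U' x₁ x₀ y₁ = π x₁ * T x₁ y₁ * U' x₁ y₁ x₀ := by
  rcases eq_or_ne x₀ y₁ with rfl | hne
  · rw [hdb]
  · rw [hdb, mul_assoc, hU'bal x₁ x₀ y₁ hne, ← mul_assoc]

theorem sum_flux_eq_of_balance [Fintype X]
    (hdb : ∀ x y, π x * T x y = π y * T y x)
    (hU'row : ∀ x y, ∑ z, U' x y z = 1)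
    (hU'bal : ∀ x y z, y ≠ z → T x y * U' x y z = T x z * U' x z y) (x₁ y₁ : X) :
    ∑ x₀, π x₀ * T x₀ x₁ * U' x₁ x₀ y₁ = π x₁ * T x₁ y₁ := by
  simp_rw [flux_eq_reverse_flux_of_balance hdb hU'bal _ x₁ y₁, ← Finset.mul_sum, hU'row, mul_one]

end

theorem no_backtracking_invariance_general
    {X : Type*} [Fintype X] [DecidableEq X]
    (T : X → X → ℝ) (π : X → ℝ)
    (hTnn : ∀ x y, 0 ≤ T x y)
    (hdb : ∀ x y, π x * T x y = π y * T y x)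
    (U' : X → X → X → ℝ)
    (hU'row : ∀ x y, ∑ z, U' x y z = 1)
    (hU'bal : ∀ x y z, y ≠ z → T x y * U' x y z = T x z * U' x z y)
    (Tdd : X × X → X × X → ℝ)
    (hTdd : ∀ p q, Tdd p q = (if p.2 = q.1 then 1 else 0) * U' p.2 p.1 q.2) :
    ∀ x₁ y₁ : X, 0 < T x₁ y₁ →
      ∑ p ∈ Finset.univ.filter (fun p : X × X => 0 < T p.1 p.2),
        (π p.1 * T p.1 p.2) * Tdd p (x₁, y₁) = π x₁ * T x₁ y₁ := by
  intro x₁ y₁ _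
  have hsupport : ∀ p ∈ Finset.univ, π p.1 * T p.1 p.2 * Tdd p (x₁, y₁) ≠ 0 → 0 < T p.1 p.2 :=
    fun p _ hp => (hTnn _ _).lt_of_ne' fun hT => hp (by rw [hT, mul_zero, zero_mul])
  rw [Finset.sum_filter_of_ne hsupport, Fintype.sum_prod_type]
  simp only [hTdd, ite_mul, one_mul, zero_mul, mul_ite, mul_zero, Finset.sum_ite_eq']
  simpa only [Finset.mem_univ, if_true] using sum_flux_eq_of_balance hdb hU'row hU'bal x₁ y₁

theorem no_backtracking_invariance
    {X : Type*} [Fintype X] [DecidableEq X]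
    (T : X → X → ℝ) (π : X → ℝ)
    (hTnn : ∀ x y, 0 ≤ T x y) (hTrow : ∀ x, ∑ y, T x y = 1)
    (hπnn : ∀ x, 0 ≤ π x) (hπsum : ∑ x, π x = 1)
    (hdb : ∀ x y, π x * T x y = π y * T y x)
    (U' : X → X → X → ℝ)
    (hU'nn : ∀ x y z, 0 ≤ U' x y z) (hU'row : ∀ x y, ∑ z, U' x y z = 1)
    (hU'bal : ∀ x y z, y ≠ z → T x y * U' x y z = T x z * U' x z y)
    (Tdd : X × X → X × X → ℝ)
    (hTdd : ∀ p q, Tdd p q = (if p.2 = q.1 then 1 else 0) * U' p.2 p.1 q.2) :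
    ∀ x₁ y₁ : X, 0 < T x₁ y₁ →
      ∑ p ∈ Finset.univ.filter (fun p : X × X => 0 < T p.1 p.2),
        (π p.1 * T p.1 p.2) * Tdd p (x₁, y₁) = π x₁ * T x₁ y₁ :=
  no_backtracking_invariance_general T π hTnn hdb U' hU'row hU'bal Tdd hTdd
end

section
/- If X has at least three elements and T is irreducible, then the no-backtracking chain T̈' on Ẍ is not reversible with respect to π̈: there exist states (x,y), (y,z) ∈ Ẍ with π̈(x,y)·T̈'((x,y),(y,z)) ≠ π̈(y,z)·T̈'((y,z),(x,y)). -/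
/-!
An irreducible chain on at least three states has a path `x → y → z` with `x ≠ z`: otherwise
every state `a` would have at most one successor (namely any predecessor of `a`), and every
state reachable from `a` would be `a` itself or that successor. Along such a path the forward
no-backtracking move `(x, y) → (y, z)` has positive probability `U'_y(x, z) ≥ T(y, z) > 0`,
while the reverse move `(y, z) → (x, y)` is impossible because `z ≠ x`.
-/

namespace Relation

variable {α : Type*} {r : α → α → Prop}

theorem TransGen.eq_or_of_forall_return (hret : ∀ x y z, r x y → r y z → x = z)
    {x v : α} (h : TransGen r x v) : v = x ∨ r x v := by
  induction h with
  | single hxv => exact Or.inr hxv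
  | tail _ hvw ih =>
    rcases ih with rfl | hxv
    · exact Or.inr hvw
    · exact Or.inl (hret _ _ _ hxv hvw).symm

theorem exists_two_step_ne_of_forall_transGen (h3 : ∃ a b c : α, a ≠ b ∧ a ≠ c ∧ b ≠ c)
    (hr : ∀ a b, TransGen r a b) : ∃ x y z, r x y ∧ r y z ∧ x ≠ z := by
  by_contra! hret
  obtain ⟨a, b, c, hab, hac, hbc⟩ := h3
  have succ_of_ne {v : α} (hv : a ≠ v) : r a v :=
    ((hr a v).eq_or_of_forall_return hret).resolve_left hv.symm
  obtain ⟨p, -, hpa⟩ := TransGen.tail'_iff.mp (hr a a)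
  exact hbc ((hret p a b hpa (succ_of_ne hab)).symm.trans (hret p a c hpa (succ_of_ne hac)))

end Relation

theorem no_backtracking_nonreversible_general
    {X : Type*} [Fintype X] [DecidableEq X]
    (hcard : 3 ≤ Fintype.card X)
    (T : X → X → ℝ) (π : X → ℝ)
    (hπpos : ∀ x, 0 < π x)
    (hirr : ∀ x y : X, Relation.TransGen (fun a b => 0 < T a b) x y)
    (U' : X → X → X → ℝ)
    (hU'ge : ∀ x y z, y ≠ z → T x z ≤ U' x y z)
    (Tdd : X × X → X × X → ℝ)
    (hTdd : ∀ p q, Tdd p q = (if p.2 = q.1 then 1 else 0) * U' p.2 p.1 q.2) :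
    ∃ x y z : X, 0 < T x y ∧ 0 < T y z ∧
      (π x * T x y) * Tdd (x, y) (y, z) ≠
      (π y * T y z) * Tdd (y, z) (x, y) := by
  obtain ⟨x, y, z, hxy, hyz, hxz⟩ :=
    Relation.exists_two_step_ne_of_forall_transGen (Fintype.two_lt_card_iff.mp hcard) hirr
  have hU : 0 < U' y x z := hyz.trans_le (hU'ge y x z hxz)
  refine ⟨x, y, z, hxy, hyz, ?_⟩
  rw [hTdd, hTdd, if_pos rfl, if_neg hxz.symm, zero_mul, mul_zero, one_mul]
  have := hπpos x
  positivity

theorem no_backtracking_nonreversible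
    {X : Type*} [Fintype X] [DecidableEq X]
    (hcard : 3 ≤ Fintype.card X)
    (T : X → X → ℝ) (π : X → ℝ)
    (hTnn : ∀ x y, 0 ≤ T x y) (hTrow : ∀ x, ∑ y, T x y = 1)
    (hπpos : ∀ x, 0 < π x) (hπsum : ∑ x, π x = 1)
    (hdb : ∀ x y, π x * T x y = π y * T y x)
    (hirr : ∀ x y : X, Relation.TransGen (fun a b => 0 < T a b) x y)
    (U' : X → X → X → ℝ)
    (hU'nn : ∀ x y z, 0 ≤ U' x y z) (hU'row : ∀ x y, ∑ z, U' x y z = 1)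
    (hU'bal : ∀ x y z, y ≠ z → T x y * U' x y z = T x z * U' x z y)
    (hU'ge : ∀ x y z, y ≠ z → T x z ≤ U' x y z)
    (Tdd : X × X → X × X → ℝ)
    (hTdd : ∀ p q, Tdd p q = (if p.2 = q.1 then 1 else 0) * U' p.2 p.1 q.2) :
    ∃ x y z : X, 0 < T x y ∧ 0 < T y z ∧
      (π x * T x y) * Tdd (x, y) (y, z) ≠
      (π y * T y z) * Tdd (y, z) (x, y) :=
  no_backtracking_nonreversible_general hcard T π hπpos hirr U' hU'ge Tdd hTdd
end

section
/- If T and T' both satisfy detailed balance with respect to π and T'(x,y) ≥ T(x,y) for all x ≠ y, then there exists a finite sequence of stochastic matrices T = T₀, T₁, ..., T_k = T', each satisfying detailed balance with respect to π, such that consecutive matrices differ only in the four entries indexed by some pair of states {A,B} (with off-diagonal entries nondecreasing along the sequence). -/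
/-!
Order the unordered pairs of states as `p₁, …, p_k` and let `Tᵢ` take its off-diagonal entries
from `T'` on the pairs `p₁, …, pᵢ` and from `T` elsewhere, with the diagonal chosen to make the rows
sum to one. Detailed balance is a condition on unordered pairs, so each `Tᵢ` inherits it from `T`
and `T'`. Since `T ≤ T'` off the diagonal, the off-diagonal row sums of `Tᵢ` are at most those of
`T'`, which keeps the diagonal nonnegative. Passing from `Tᵢ` to `Tᵢ₊₁` changes only the two
off-diagonal entries of `p_{i+1} = {A, B}` and hence only the diagonal entries at `A` and `B`.
-/

open Finset

theorem Finset.exists_insert_chain_to_univ (α : Type*) [Fintype α] [DecidableEq α] :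
    ∃ (k : ℕ) (S : ℕ → Finset α), S 0 = ∅ ∧ S k = univ ∧
      ∀ i < k, ∃ a, S (i + 1) = insert a (S i) := by
  let e := Fintype.equivFin α
  refine ⟨Fintype.card α, fun i => univ.filter (fun a => (e a : ℕ) < i), by simp,
    by ext a; simp, fun i hi => ⟨e.symm ⟨i, hi⟩, ?_⟩⟩
  ext a
  simp only [mem_filter, mem_univ, true_and, mem_insert, Equiv.eq_symm_apply, Fin.ext_iff]
  omega

section

variable {X : Type*} [Fintype X] [DecidableEq X]

def fillDiagonal (M : X → X → ℝ) : X → X → ℝ := fun x y =>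
  if x = y then 1 - ∑ z ∈ univ.erase x, M x z else M x y

theorem fillDiagonal_of_ne (M : X → X → ℝ) {x y : X} (h : x ≠ y) :
    fillDiagonal M x y = M x y := if_neg h

theorem fillDiagonal_self (M : X → X → ℝ) (x : X) :
    fillDiagonal M x x = 1 - ∑ z ∈ univ.erase x, M x z := if_pos rfl

theorem sum_fillDiagonal (M : X → X → ℝ) (x : X) : ∑ y, fillDiagonal M x y = 1 := by
  rw [← add_sum_erase _ _ (mem_univ x), fillDiagonal_self,
    sum_congr rfl fun z hz => fillDiagonal_of_ne M (ne_of_mem_erase hz).symm]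
  ring

theorem fillDiagonal_eq_self {M : X → X → ℝ} (hM : ∀ x, ∑ y, M x y = 1) : fillDiagonal M = M := by
  funext x y
  obtain rfl | h := eq_or_ne x y
  · rw [fillDiagonal_self, ← hM x, ← add_sum_erase _ _ (mem_univ x)]
    ring
  · exact fillDiagonal_of_ne M h

theorem fillDiagonal_congr_row {M N : X → X → ℝ} {x : X} (h : ∀ z, z ≠ x → M x z = N x z) :
    fillDiagonal M x = fillDiagonal N x := by
  funext y
  obtain rfl | hxy := eq_or_ne x y
  · rw [fillDiagonal_self, fillDiagonal_self,
      sum_congr rfl fun z hz => h z (ne_of_mem_erase hz)]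
  · rw [fillDiagonal_of_ne M hxy, fillDiagonal_of_ne N hxy, h y hxy.symm]

theorem fillDiagonal_detailedBalance {M : X → X → ℝ} {π : X → ℝ}
    (h : ∀ x y, x ≠ y → π x * M x y = π y * M y x) (x y : X) :
    π x * fillDiagonal M x y = π y * fillDiagonal M y x := by
  obtain rfl | hxy := eq_or_ne x y
  · rfl
  · rw [fillDiagonal_of_ne M hxy, fillDiagonal_of_ne M hxy.symm, h x y hxy]

theorem fillDiagonal_nonneg {M : X → X → ℝ} {x : X} (hM : ∀ y, y ≠ x → 0 ≤ M x y)
    (hsum : ∑ z ∈ univ.erase x, M x z ≤ 1) (y : X) : 0 ≤ fillDiagonal M x y := by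
  obtain rfl | hxy := eq_or_ne x y
  · rw [fillDiagonal_self]
    linarith
  · rw [fillDiagonal_of_ne M hxy]
    exact hM y hxy.symm

def switchOn (T T' : X → X → ℝ) (S : Finset (Sym2 X)) : X → X → ℝ :=
  fillDiagonal fun x y => if s(x, y) ∈ S then T' x y else T x y

variable {T T' : X → X → ℝ}

theorem switchOn_empty (hT : ∀ x, ∑ y, T x y = 1) : switchOn T T' ∅ = T := by
  simpa only [switchOn, notMem_empty, if_false] using fillDiagonal_eq_self hT

theorem switchOn_univ (hT' : ∀ x, ∑ y, T' x y = 1) : switchOn T T' univ = T' := by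
  simpa only [switchOn, mem_univ, if_true] using fillDiagonal_eq_self hT'

theorem sum_switchOn (S : Finset (Sym2 X)) (x : X) : ∑ y, switchOn T T' S x y = 1 :=
  sum_fillDiagonal _ x

theorem switchOn_nonneg (hT : ∀ x y, 0 ≤ T x y) (hT' : ∀ x y, 0 ≤ T' x y)
    (hT'row : ∀ x, ∑ y, T' x y = 1) (hge : ∀ x y, x ≠ y → T x y ≤ T' x y)
    (S : Finset (Sym2 X)) (x y : X) : 0 ≤ switchOn T T' S x y := by
  refine fillDiagonal_nonneg (fun z _ => by split_ifs <;> simp only [hT, hT']) ?_ y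
  have hle : ∑ z ∈ univ.erase x, (if s(x, z) ∈ S then T' x z else T x z) ≤
      ∑ z ∈ univ.erase x, T' x z :=
    sum_le_sum fun z hz => by
      split_ifs
      · exact le_rfl
      · exact hge x z (ne_of_mem_erase hz).symm
  have hrow : T' x x + ∑ z ∈ univ.erase x, T' x z = 1 := by
    rw [add_sum_erase _ _ (mem_univ x), hT'row]
  linarith [hT' x x]

theorem switchOn_detailedBalance {π : X → ℝ} (hdb : ∀ x y, π x * T x y = π y * T y x)
    (hdb' : ∀ x y, π x * T' x y = π y * T' y x) (S : Finset (Sym2 X)) (x y : X) :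
    π x * switchOn T T' S x y = π y * switchOn T T' S y x :=
  fillDiagonal_detailedBalance (fun x y _ => by
    rw [Sym2.eq_swap]
    split_ifs
    · exact hdb' x y
    · exact hdb x y) x y

theorem switchOn_mono (hge : ∀ x y, x ≠ y → T x y ≤ T' x y) {S S' : Finset (Sym2 X)}
    (hS : S ⊆ S') {x y : X} (hxy : x ≠ y) : switchOn T T' S x y ≤ switchOn T T' S' x y := by
  simp only [switchOn, fillDiagonal_of_ne _ hxy]
  split_ifs with h h'
  · exact le_rfl
  · exact absurd (hS h) h'
  · exact hge x y hxy
  · exact le_rfl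

theorem switchOn_insert_apply_of_not_mem_pair (S : Finset (Sym2 X)) {A B x y : X}
    (h : ¬ ((x = A ∨ x = B) ∧ (y = A ∨ y = B))) :
    switchOn T T' (insert s(A, B) S) x y = switchOn T T' S x y := by
  have hentry : ∀ z, ¬ ((z = A ∨ z = B) ∧ (x = A ∨ x = B)) →
      (if s(x, z) ∈ insert s(A, B) S then T' x z else T x z) =
        (if s(x, z) ∈ S then T' x z else T x z) := by
    intro z hz
    have hne : s(x, z) ≠ s(A, B) := fun he => hz (by
      rw [← Sym2.mem_iff, ← Sym2.mem_iff, ← he]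
      exact ⟨Sym2.mem_mk_right x z, Sym2.mem_mk_left x z⟩)
    simp only [mem_insert, hne, false_or]
  by_cases hx : x = A ∨ x = B
  · have hy : ¬ (y = A ∨ y = B) := fun hy => h ⟨hx, hy⟩
    have hxy : x ≠ y := fun he => hy (he ▸ hx)
    simp only [switchOn, fillDiagonal_of_ne _ hxy]
    exact hentry y fun hyx => hy hyx.1
  · exact congrFun (fillDiagonal_congr_row fun z _ => hentry z fun hzx => hx hzx.2) y

end

theorem peskun_decomposition_general
    {X : Type*} [Fintype X]
    (T T' : X → X → ℝ) (π : X → ℝ)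
    (hTnn : ∀ x y, 0 ≤ T x y) (hTrow : ∀ x, ∑ y, T x y = 1)
    (hT'nn : ∀ x y, 0 ≤ T' x y) (hT'row : ∀ x, ∑ y, T' x y = 1)
    (hdb : ∀ x y, π x * T x y = π y * T y x)
    (hdb' : ∀ x y, π x * T' x y = π y * T' y x)
    (hge : ∀ x y, x ≠ y → T x y ≤ T' x y) :
    ∃ (k : ℕ) (seq : ℕ → X → X → ℝ),
      seq 0 = T ∧ seq k = T' ∧
      (∀ i ≤ k, (∀ x y, 0 ≤ seq i x y) ∧ (∀ x, ∑ y, seq i x y = 1) ∧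
        (∀ x y, π x * seq i x y = π y * seq i y x)) ∧
      (∀ i < k, ∃ A B : X,
        (∀ x y, ¬ ((x = A ∨ x = B) ∧ (y = A ∨ y = B)) →
          seq (i + 1) x y = seq i x y) ∧
        (∀ x y, x ≠ y → seq i x y ≤ seq (i + 1) x y)) := by
  classical
  obtain ⟨k, S, hS0, hSk, hstep⟩ := Finset.exists_insert_chain_to_univ (Sym2 X)
  refine ⟨k, fun i => switchOn T T' (S i), (congrArg _ hS0).trans (switchOn_empty hTrow),
    (congrArg _ hSk).trans (switchOn_univ hT'row),
    fun i _ => ⟨switchOn_nonneg hTnn hT'nn hT'row hge (S i), sum_switchOn (S i),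
      switchOn_detailedBalance hdb hdb' (S i)⟩, fun i hi => ?_⟩
  obtain ⟨p, hp⟩ := hstep i hi
  induction p using Sym2.ind with
  | h A B =>
    refine ⟨A, B, fun x y hxy => ?_, fun x y hxy => switchOn_mono hge ?_ hxy⟩
    · simp only [hp]
      exact switchOn_insert_apply_of_not_mem_pair (S i) hxy
    · exact hp ▸ subset_insert _ _

theorem peskun_decomposition
    {X : Type*} [Fintype X]
    (T T' : X → X → ℝ) (π : X → ℝ)
    (hTnn : ∀ x y, 0 ≤ T x y) (hTrow : ∀ x, ∑ y, T x y = 1)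
    (hT'nn : ∀ x y, 0 ≤ T' x y) (hT'row : ∀ x, ∑ y, T' x y = 1)
    (hπnn : ∀ x, 0 ≤ π x) (hπsum : ∑ x, π x = 1)
    (hdb : ∀ x y, π x * T x y = π y * T y x)
    (hdb' : ∀ x y, π x * T' x y = π y * T' y x)
    (hge : ∀ x y, x ≠ y → T x y ≤ T' x y) :
    ∃ (k : ℕ) (seq : ℕ → X → X → ℝ),
      seq 0 = T ∧ seq k = T' ∧
      (∀ i ≤ k, (∀ x y, 0 ≤ seq i x y) ∧ (∀ x, ∑ y, seq i x y = 1) ∧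
        (∀ x y, π x * seq i x y = π y * seq i y x)) ∧
      (∀ i < k, ∃ A B : X,
        (∀ x y, ¬ ((x = A ∨ x = B) ∧ (y = A ∨ y = B)) →
          seq (i + 1) x y = seq i x y) ∧
        (∀ x y, x ≠ y → seq i x y ≤ seq (i + 1) x y)) :=
  peskun_decomposition_general T T' π hTnn hTrow hT'nn hT'row hdb hdb' hge
end

section
/- Consider the deterministic no-backtracking chain derived from the simple random walk on {1,...,N} (with T(x,x±1) = 1/2 and holding at the endpoints): the induced transition map on Ẍ = {(x,y) : T(x,y) > 0} obtained by applying Liu's modified update is a deterministic permutation of Ẍ, i.e., for every state (x,y) ∈ Ẍ there is exactly one successor state with transition probability 1. -/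
/-!
Every vertex `y` of the path with loops at its two ends has exactly two neighbours, each reached
with probability `1/2`. Coming from one of them, `x`, Liu's update sends all the mass to the other
neighbour `z`: `U'_y(x, z) = min ((1/2) / (1/2), (1/2) / (1/2)) = 1`, every non-neighbour gets `0`,
and the row sum forces the holding weight `U'_y(x, x)` to vanish.
-/

/-- The support `{(x, y) | 0 < T x y}` of the walk, on `Fin N`: the loops sit at `0` and `N - 1`. -/
def PathAdj (N : ℕ) (a b : Fin N) : Prop :=
  (a.val + 1 = b.val ∨ b.val + 1 = a.val) ∨ (a = b ∧ (a.val = 0 ∨ a.val + 1 = N))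

-- Spelled out so that `hT` unfolds to `T x y = if PathAdj N x y then 1/2 else 0`.
instance (N : ℕ) : DecidableRel (PathAdj N) := fun a b =>
  inferInstanceAs (Decidable ((a.val + 1 = b.val ∨ b.val + 1 = a.val) ∨
    (a = b ∧ (a.val = 0 ∨ a.val + 1 = N))))

namespace PathAdj

variable {N : ℕ} {x y : Fin N}

theorem symm (h : PathAdj N x y) : PathAdj N y x := by
  unfold PathAdj at *
  rcases h with (h | h) | ⟨rfl, h⟩ <;> simp_all

theorem exists_other_neighbour (hN : 2 ≤ N) (h : PathAdj N y x) :
    ∃ z, z ≠ x ∧ PathAdj N y z ∧ ∀ w, PathAdj N y w → w = x ∨ w = z := by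
  unfold PathAdj at *
  simp only [Fin.ext_iff, ne_eq] at *
  have hy := y.isLt
  rcases h with (h | h) | ⟨h, h0 | hend⟩
  · by_cases hb : y.val = 0
    · exact ⟨y, by omega, by omega, fun w => by omega⟩
    · refine ⟨⟨y.val - 1, by omega⟩, ?_, ?_, fun w => ?_⟩ <;> simp only <;> omega
  · by_cases hb : y.val + 1 = N
    · exact ⟨y, by omega, by omega, fun w => by omega⟩
    · refine ⟨⟨y.val + 1, by omega⟩, ?_, Or.inl (Or.inl rfl), fun w => ?_⟩ <;>
        simp only <;> omega
  · refine ⟨⟨1, by omega⟩, ?_, ?_, fun w => ?_⟩ <;> simp only <;> omega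
  · refine ⟨⟨y.val - 1, by omega⟩, ?_, ?_, fun w => ?_⟩ <;> simp only <;> omega

end PathAdj

theorem liuUpdate_eq_single {α : Type*} [Fintype α] [DecidableEq α] {t u : α → ℝ} {x z : α}
    (hu : ∀ w, w ≠ x → u w = min (t w / (1 - t x)) (t w / (1 - t w))) (hsum : ∑ w, u w = 1)
    (hxz : x ≠ z) (hx : t x = 1 / 2) (hz : t z = 1 / 2)
    (hzero : ∀ w, w ≠ x → w ≠ z → t w = 0) :
    u = Pi.single z 1 := by
  have huz : u z = 1 := by
    rw [hu z hxz.symm, hz, hx]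
    norm_num
  have huw : ∀ w, w ≠ x → w ≠ z → u w = 0 := by
    intro w hwx hwz
    rw [hu w hwx, hzero w hwx hwz]
    simp
  have hux : u x = 0 := by
    rw [Fintype.sum_eq_add x z hxz (fun w ⟨hwx, hwz⟩ => huw w hwx hwz), huz] at hsum
    linarith
  funext w
  rw [Pi.single_apply]
  split_ifs with hwz
  · rw [hwz, huz]
  · by_cases hwx : w = x
    · rw [hwx, hux]
    · exact huw w hwx hwz

theorem random_walk_no_backtracking_deterministic
    (N : ℕ) (hN : 2 ≤ N)
    (T : Fin N → Fin N → ℝ)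
    (hT : ∀ x y : Fin N, T x y =
      if (x.val + 1 = y.val ∨ y.val + 1 = x.val) ∨
         (x = y ∧ (x.val = 0 ∨ x.val + 1 = N)) then 1/2 else 0)
    (U' : Fin N → Fin N → Fin N → ℝ)
    (hU' : ∀ x y z : Fin N, z ≠ y →
      U' x y z = min (T x z / (1 - T x y)) (T x z / (1 - T x z)))
    (hU'row : ∀ x y : Fin N, ∑ z, U' x y z = 1)
    (Tdd : Fin N × Fin N → Fin N × Fin N → ℝ)
    (hTdd : ∀ p q, Tdd p q = (if p.2 = q.1 then 1 else 0) * U' p.2 p.1 q.2) :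
    ∀ p : Fin N × Fin N, 0 < T p.1 p.2 →
      ∃! q : Fin N × Fin N, 0 < T q.1 q.2 ∧ Tdd p q = 1 := by
  have hT' : ∀ a b, T a b = if PathAdj N a b then 1 / 2 else 0 := hT
  have hpos : ∀ a b, 0 < T a b ↔ PathAdj N a b := by
    intro a b
    rw [hT']
    split_ifs with h <;> simp [h]
  rintro ⟨x, y⟩ hxy
  obtain ⟨z, hzx, hyz, hnbr⟩ := ((hpos x y).1 hxy).symm.exists_other_neighbour hN
  have hU : U' y x = Pi.single z 1 :=
    liuUpdate_eq_single (hU' y x) (hU'row y x) hzx.symm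
      (by rw [hT', if_pos ((hpos x y).1 hxy).symm]) (by rw [hT', if_pos hyz])
      (fun w hwx hwz => by rw [hT', if_neg fun hyw => (hnbr w hyw).elim hwx hwz])
  have hstep : ∀ q, Tdd (x, y) q = 1 ↔ q = (y, z) := by
    rintro ⟨a, b⟩
    rw [hTdd, hU]
    simp only [Pi.single_apply, Prod.mk.injEq, ite_mul, one_mul, zero_mul]
    split_ifs <;> simp_all [eq_comm]
  exact ⟨(y, z), ⟨(hpos y z).2 hyz, (hstep _).2 rfl⟩, fun q hq => (hstep q).1 hq.2⟩
end
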